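/- arXiv:1704.08754 — 2 statements merged into one kernel-verified Lean document; each statement's English description precedes it below -/
import Mathlib

section
/- Assume a_X > b_X > 0, a_Y + b_Y > 0, b_Y > a_Y, and 0 < T_y < T_I, where T_I = (b_Y − a_Y)/(2·ln(a_X/b_X)). Then T_X'(x) > 0 for every x ∈ (0, 1/2). -/
open Real Filter Set Topology

/-- QRE response of the second player. -/
noncomputable def qreY (aY bY Ty : ℝ) (x : ℝ) : ℝ :=
  (1 + Real.exp ((bY - (aY + bY) * x) / Ty))⁻¹

/-- QRE temperature curve for the first player. -/
noncomputable def qreTX (aX bX aY bY Ty : ℝ) (x : ℝ) : ℝ :=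
  (bX - (aX + bX) * qreY aY bY Ty x) / Real.log (1 / x - 1)

/-- The auxiliary function L(x) = y(x) + x(1-x) ln(1/x-1) y'(x). -/
noncomputable def qreL (aY bY Ty : ℝ) (x : ℝ) : ℝ :=
  qreY aY bY Ty x + x * (1 - x) * Real.log (1 / x - 1) * deriv (qreY aY bY Ty) x

/-!
Writing `V = log (1/x - 1)`, one has `V' = -1 / (x (1 - x))`, so the quotient rule gives
`T_X' = (bX - (aX + bX) L) / (x (1 - x) V²)` and the claim is `L(x) < bX / (aX + bX)`.
Now `y = sigmoid t` with `t = ((aY + bY) x - bY) / Ty`, and `log r < sinh (log r)` gives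
`x (1 - x) V < 1/2 - x`. With `m = log (aX / bX)`, the condition `Ty < T_I` says exactly
`(aY + bY) / Ty * (1/2 - x) < -m - t`, so `L(x)` lies below the tangent line of `sigmoid` at `t`
evaluated at `-m`. As `t < -m ≤ 0` and `sigmoid` is strictly convex on `(-∞, 0]`, that value is
below `sigmoid (-m) = bX / (aX + bX)`.
-/

namespace Real

lemma one_lt_one_div_sub_one {x : ℝ} (hx0 : 0 < x) (hx : x < 1 / 2) : 1 < 1 / x - 1 := by
  rw [lt_sub_iff_add_lt, lt_div_iff₀ hx0]
  linarith

lemma log_lt_sub_inv_div_two {r : ℝ} (hr : 1 < r) : log r < (r - r⁻¹) / 2 := by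
  have h := self_lt_sinh_iff.2 (log_pos hr)
  rwa [sinh_eq, exp_log (by linarith), exp_neg, exp_log (by linarith)] at h

lemma mul_one_sub_mul_log_inv_sub_one_lt {x : ℝ} (hx0 : 0 < x) (hx : x < 1 / 2) :
    x * (1 - x) * log (1 / x - 1) < 1 / 2 - x := by
  calc x * (1 - x) * log (1 / x - 1)
      < x * (1 - x) * ((1 / x - 1 - (1 / x - 1)⁻¹) / 2) :=
        mul_lt_mul_of_pos_left (log_lt_sub_inv_div_two (one_lt_one_div_sub_one hx0 hx))
          (by nlinarith)
    _ = 1 / 2 - x := by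
        have : 1 - x ≠ 0 := by linarith
        field_simp
        ring

lemma sigmoid_lt_half {t : ℝ} (ht : t < 0) : sigmoid t < 2⁻¹ :=
  sigmoid_zero ▸ sigmoid_lt ht

lemma sigmoid_neg_log {r : ℝ} (hr : 0 < r) : sigmoid (-log r) = (1 + r)⁻¹ := by
  rw [sigmoid_def, neg_neg, exp_log hr]

/-- `sigmoid' = σ(1 - σ) = 1/4 - (σ - 1/2)²` increases as long as `σ < 1/2`. -/
lemma strictConvexOn_sigmoid : StrictConvexOn ℝ (Iic 0) sigmoid := by
  refine StrictMonoOn.strictConvexOn_of_deriv (convex_Iic 0) continuous_sigmoid.continuousOn ?_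
  rw [deriv_sigmoid, interior_Iic]
  intro a _ b hb hab
  have := sigmoid_lt hab
  have := sigmoid_lt_half hb
  nlinarith

lemma sigmoid_add_deriv_mul_lt {t s : ℝ} (hts : t < s) (hs : s ≤ 0) :
    sigmoid t + sigmoid t * (1 - sigmoid t) * (s - t) < sigmoid s := by
  have h := strictConvexOn_sigmoid.lt_slope_of_hasDerivAt (hts.le.trans hs) hs hts
    (hasDerivAt_sigmoid t)
  rw [slope_def_field, lt_div_iff₀ (sub_pos.2 hts)] at h
  linarith

end Real

lemma qreY_eq_sigmoid (aY bY Ty : ℝ) :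
    qreY aY bY Ty = fun x => sigmoid (((aY + bY) * x - bY) / Ty) := by
  ext x
  rw [qreY, sigmoid_def, ← neg_div, neg_sub]

lemma hasDerivAt_qreY (aY bY Ty x : ℝ) :
    HasDerivAt (qreY aY bY Ty)
      ((aY + bY) / Ty * (sigmoid (((aY + bY) * x - bY) / Ty) *
        (1 - sigmoid (((aY + bY) * x - bY) / Ty)))) x := by
  have hlin : HasDerivAt (fun z => ((aY + bY) * z - bY) / Ty) ((aY + bY) / Ty) x := by
    simpa using (((hasDerivAt_id x).const_mul (aY + bY)).sub_const bY).div_const Ty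
  rw [qreY_eq_sigmoid, mul_comm]
  exact (hasDerivAt_sigmoid _).comp x hlin

lemma hasDerivAt_qreTX (aX bX aY bY Ty : ℝ) {x : ℝ} (hx0 : x ≠ 0) (hx1 : x ≠ 1)
    (hV : log (1 / x - 1) ≠ 0) :
    HasDerivAt (qreTX aX bX aY bY Ty)
      ((bX - (aX + bX) * qreL aY bY Ty x) / (x * (1 - x) * log (1 / x - 1) ^ 2)) x := by
  have hr : 1 / x - 1 ≠ 0 := by
    rw [sub_ne_zero, ne_eq, div_eq_one_iff_eq hx0]; exact Ne.symm hx1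
  have hnum := ((hasDerivAt_qreY aY bY Ty x).const_mul (aX + bX)).const_sub bX
  have hden : HasDerivAt (fun z => log (1 / z - 1)) (-(x ^ 2)⁻¹ / (1 / x - 1)) x := by
    simpa only [one_div] using ((hasDerivAt_inv hx0).sub_const 1).log (by simpa using hr)
  refine (hnum.div hden hV).congr_deriv ?_
  have h1x : 1 - x ≠ 0 := sub_ne_zero.2 (Ne.symm hx1)
  rw [qreL, (hasDerivAt_qreY aY bY Ty x).deriv]
  field_simp
  ring

lemma qreL_lt (aX bX aY bY Ty : ℝ) (hTy : 0 < Ty) (hab : aX > bX) (hbX : bX > 0)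
    (hY : aY + bY > 0) (hTI : Ty < (bY - aY) / (2 * log (aX / bX)))
    {x : ℝ} (hx0 : 0 < x) (hx : x < 1 / 2) :
    qreL aY bY Ty x < bX / (aX + bX) := by
  set t := ((aY + bY) * x - bY) / Ty
  set m := log (aX / bX)
  set β := (aY + bY) / Ty
  have hm : 0 < m := log_pos ((one_lt_div hbX).2 hab)
  have hmT : m < (bY - aY) / (2 * Ty) := by
    rw [lt_div_iff₀ (by positivity)] at hTI ⊢
    linarith
  have ht : β * (1 / 2 - x) = -t - (bY - aY) / (2 * Ty) := by
    simp only [β, t]; field_simp; ring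
  have hβ : 0 < β * (1 / 2 - x) := mul_pos (div_pos hY hTy) (by linarith)
  have hgap : (1 / 2 - x) * β < -m - t := by linarith
  have hd : 0 < sigmoid t * (1 - sigmoid t) :=
    mul_pos (sigmoid_pos t) (sub_pos.2 (sigmoid_lt_one t))
  calc qreL aY bY Ty x
      = sigmoid t + x * (1 - x) * log (1 / x - 1) * β * (sigmoid t * (1 - sigmoid t)) := by
        rw [qreL, (hasDerivAt_qreY aY bY Ty x).deriv, qreY_eq_sigmoid]; ring
    _ ≤ sigmoid t + (1 / 2 - x) * β * (sigmoid t * (1 - sigmoid t)) := by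
        have := mul_one_sub_mul_log_inv_sub_one_lt hx0 hx
        gcongr
    _ < sigmoid t + sigmoid t * (1 - sigmoid t) * (-m - t) := by
        have := mul_lt_mul_of_pos_right hgap hd
        linarith
    _ < sigmoid (-m) := sigmoid_add_deriv_mul_lt (by linarith) (by linarith)
    _ = bX / (aX + bX) := by
        rw [sigmoid_neg_log (div_pos (hbX.trans hab) hbX), one_add_div hbX.ne', inv_div,
          add_comm]

theorem stmt_8_general (aX bX aY bY Ty : ℝ) (hTy : 0 < Ty)
    (hab : aX > bX) (hbX : bX > 0) (hY : aY + bY > 0)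
    (hTI : Ty < (bY - aY) / (2 * Real.log (aX / bX))) :
    ∀ x ∈ Set.Ioo (0:ℝ) (1/2), 0 < deriv (qreTX aX bX aY bY Ty) x := by
  rintro x ⟨hx0, hx⟩
  have hV : 0 < log (1 / x - 1) := log_pos (one_lt_one_div_sub_one hx0 hx)
  rw [(hasDerivAt_qreTX aX bX aY bY Ty hx0.ne' (by linarith) hV.ne').deriv]
  have hL := qreL_lt aX bX aY bY Ty hTy hab hbX hY hTI hx0 hx
  rw [lt_div_iff₀' (by linarith)] at hL
  have h1x : 0 < 1 - x := by linarith
  exact div_pos (by linarith) (by positivity)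

theorem stmt_8 (aX bX aY bY Ty : ℝ) (hTy : 0 < Ty)
    (hab : aX > bX) (hbX : bX > 0) (hY : aY + bY > 0) (hba : bY > aY)
    (hTI : Ty < (bY - aY) / (2 * Real.log (aX / bX))) :
    ∀ x ∈ Set.Ioo (0:ℝ) (1/2), 0 < deriv (qreTX aX bX aY bY Ty) x :=
  stmt_8_general aX bX aY bY Ty hTy hab hbX hY hTI
end

section
/- Assume a_X > b_X > 0 and a_Y + b_Y = 0, and let T_I = b_Y/ln(a_X/b_X). Then: (i) if 0 < T_y < T_I, then T_X(x) < 0 for x ∈ (1/2, 1), T_X(x) > 0 for x ∈ (0, 1/2), and T_X'(x) > 0 for x ∈ (0, 1/2); (ii) if T_y > T_I, then T_X(x) < 0 for x ∈ (0, 1/2), T_X(x) > 0 for x ∈ (1/2, 1), and T_X'(x) < 0 for x ∈ (1/2, 1). -/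
open Real Filter Set Topology

/-! When `a_Y + b_Y = 0` the response `y` is the constant `c = (1 + exp (b_Y / T_y))⁻¹`, so
`T_X x = K / log (1/x - 1)` with `K = b_X - (a_X + b_X) c`, and `T_X' x = K / (x (1-x) log² (1/x - 1))`.
Since `log (1/x - 1)` is positive on `(0, 1/2)` and negative on `(1/2, 1)`, every claimed sign is
the sign of `K`, and `K > 0` exactly when `log (a_X / b_X) < b_Y / T_y`, i.e. when `T_y < T_I`. -/

lemma log_one_div_sub_one_pos {x : ℝ} (hx0 : 0 < x) (hx : x < 1 / 2) :
    0 < Real.log (1 / x - 1) := by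
  apply Real.log_pos
  rw [lt_sub_iff_add_lt, lt_div_iff₀ hx0]
  linarith

lemma log_one_div_sub_one_neg {x : ℝ} (hx : 1 / 2 < x) (hx1 : x < 1) :
    Real.log (1 / x - 1) < 0 := by
  have hx0 : 0 < x := by linarith
  apply Real.log_neg
  · rw [sub_pos, lt_div_iff₀ hx0]; linarith
  · rw [sub_lt_iff_lt_add, div_lt_iff₀ hx0]; linarith

lemma hasDerivAt_log_one_div_sub_one {x : ℝ} (hx0 : 0 < x) (hx1 : x < 1) :
    HasDerivAt (fun t => Real.log (1 / t - 1)) (-(x * (1 - x))⁻¹) x := by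
  have hu : 1 / x - 1 ≠ 0 := by
    rw [sub_ne_zero, ne_comm, ne_eq, eq_div_iff hx0.ne']; linarith
  have h := ((hasDerivAt_inv hx0.ne').sub_const 1).log (by simpa [one_div] using hu)
  convert h using 1
  · simp only [one_div]
  · have h1x : 1 - x ≠ 0 := by linarith
    field_simp

lemma deriv_div_log_one_div_sub_one (K : ℝ) {x : ℝ} (hx0 : 0 < x) (hx1 : x < 1)
    (hlog : Real.log (1 / x - 1) ≠ 0) :
    deriv (fun t => K / Real.log (1 / t - 1)) x
      = K / (x * (1 - x) * Real.log (1 / x - 1) ^ 2) := by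
  rw [deriv_const_div K (hasDerivAt_log_one_div_sub_one hx0 hx1).differentiableAt hlog,
    (hasDerivAt_log_one_div_sub_one hx0 hx1).deriv]
  have h1x : 1 - x ≠ 0 := by linarith
  field_simp

lemma qreY_of_add_eq_zero {aY bY : ℝ} (Ty : ℝ) (hY : aY + bY = 0) :
    qreY aY bY Ty = fun _ => (1 + Real.exp (bY / Ty))⁻¹ := by
  funext x
  simp [qreY, hY]

lemma qreTX_of_add_eq_zero (aX bX : ℝ) {aY bY : ℝ} (Ty : ℝ) (hY : aY + bY = 0) :
    qreTX aX bX aY bY Ty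
      = fun x => (bX - (aX + bX) * (1 + Real.exp (bY / Ty))⁻¹) / Real.log (1 / x - 1) := by
  funext x
  simp [qreTX, qreY_of_add_eq_zero Ty hY]

lemma sub_mul_inv_one_add_exp_eq (a b s : ℝ) :
    b - (a + b) * (1 + Real.exp s)⁻¹ = (b * Real.exp s - a) / (1 + Real.exp s) := by
  field_simp
  ring

lemma sub_mul_inv_one_add_exp_pos_iff {a b : ℝ} (ha : 0 < a) (hb : 0 < b) (s : ℝ) :
    0 < b - (a + b) * (1 + Real.exp s)⁻¹ ↔ Real.log (a / b) < s := by
  rw [sub_mul_inv_one_add_exp_eq, div_pos_iff_of_pos_right (by positivity), sub_pos,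
    Real.log_lt_iff_lt_exp (div_pos ha hb), div_lt_iff₀' hb]

lemma sub_mul_inv_one_add_exp_neg_iff {a b : ℝ} (ha : 0 < a) (hb : 0 < b) (s : ℝ) :
    b - (a + b) * (1 + Real.exp s)⁻¹ < 0 ↔ s < Real.log (a / b) := by
  rw [sub_mul_inv_one_add_exp_eq, div_lt_iff₀ (by positivity), zero_mul, sub_neg,
    Real.lt_log_iff_exp_lt (div_pos ha hb), lt_div_iff₀' hb]

theorem stmt_16 (aX bX aY bY Ty : ℝ) (hTy : 0 < Ty)
    (hab : aX > bX) (hbX : bX > 0) (hY : aY + bY = 0) :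
    (Ty < bY / Real.log (aX / bX) →
      (∀ x ∈ Set.Ioo (1/2 : ℝ) 1, qreTX aX bX aY bY Ty x < 0) ∧
      (∀ x ∈ Set.Ioo (0:ℝ) (1/2), 0 < qreTX aX bX aY bY Ty x) ∧
      (∀ x ∈ Set.Ioo (0:ℝ) (1/2), 0 < deriv (qreTX aX bX aY bY Ty) x)) ∧
    (Ty > bY / Real.log (aX / bX) →
      (∀ x ∈ Set.Ioo (0:ℝ) (1/2), qreTX aX bX aY bY Ty x < 0) ∧
      (∀ x ∈ Set.Ioo (1/2 : ℝ) 1, 0 < qreTX aX bX aY bY Ty x) ∧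
      (∀ x ∈ Set.Ioo (1/2 : ℝ) 1, deriv (qreTX aX bX aY bY Ty) x < 0)) := by
  have haX : 0 < aX := hbX.trans hab
  have hlog : 0 < Real.log (aX / bX) := Real.log_pos ((one_lt_div hbX).2 hab)
  rw [qreTX_of_add_eq_zero aX bX Ty hY]
  set K := bX - (aX + bX) * (1 + Real.exp (bY / Ty))⁻¹
  constructor
  · intro hT
    have hK : 0 < K :=
      (sub_mul_inv_one_add_exp_pos_iff haX hbX _).2 ((lt_div_comm₀ hTy hlog).1 hT)
    refine ⟨fun x ⟨hx, hx1⟩ => div_neg_of_pos_of_neg hK (log_one_div_sub_one_neg hx hx1),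
      fun x ⟨hx0, hx⟩ => div_pos hK (log_one_div_sub_one_pos hx0 hx), fun x ⟨hx0, hx⟩ => ?_⟩
    have hL := log_one_div_sub_one_pos hx0 hx
    have h1x : 0 < 1 - x := by linarith
    rw [deriv_div_log_one_div_sub_one K hx0 (by linarith) hL.ne']
    exact div_pos hK (mul_pos (mul_pos hx0 h1x) (pow_pos hL 2))
  · intro hT
    have hK : K < 0 :=
      (sub_mul_inv_one_add_exp_neg_iff haX hbX _).2 ((div_lt_comm₀ hlog hTy).1 hT)
    refine ⟨fun x ⟨hx0, hx⟩ => div_neg_of_neg_of_pos hK (log_one_div_sub_one_pos hx0 hx),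
      fun x ⟨hx, hx1⟩ => div_pos_of_neg_of_neg hK (log_one_div_sub_one_neg hx hx1),
      fun x ⟨hx, hx1⟩ => ?_⟩
    have hL := log_one_div_sub_one_neg hx hx1
    have hx0 : 0 < x := by linarith
    have h1x : 0 < 1 - x := by linarith
    rw [deriv_div_log_one_div_sub_one K hx0 hx1 hL.ne]
    exact div_neg_of_neg_of_pos hK (mul_pos (mul_pos hx0 h1x) (sq_pos_of_neg hL))
end
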